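/- Let η be the Minkowski bilinear form on ℝ^{n+1}, η(x, y) = −x₀y₀ + Σ_{i=1}^{n} xᵢyᵢ. Fix a, γ ∈ ℝ^{n+1}, β ∈ ℝ, and a linear map B : ℝ^{n+1} → ℝ^{n+1} with η(Bu, v) = −η(u, Bv) for all u, v. Define the conformal vector field V̄(x) = (η(a, x) + β)·x − (1/2)η(x, x)·a + Bx + (1/2)γ and its angle function C(x) = η(V̄(x), x) on the hyperboloid. Then for every x ∈ ℝ^{n+1} with η(x, x) = −1: C(x) = −β + (1/2)·η(γ − a, x). (Hence the angle function of a conformal field of Lorentz space restricted to the hyperboloid model of ℍ^n is, up to an additive constant, a height function, and is therefore a special scalar concircular field, as asserted by Proposition 4.1 of the paper.) -/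

import Mathlib

/-!
Pairing `V̄(x)` with `x` kills the skew-adjoint part, since `η(Bx, x) = -η(x, Bx) = -η(Bx, x)`,
and leaves `β η(x, x) + ½ η(x, x) η(a, x) + ½ η(γ, x)`. On the hyperboloid `η(x, x) = -1`, so
this is `-β + ½ η(γ - a, x)`.
-/

open LinearMap (BilinForm)

namespace LinearMap.BilinForm

variable {M : Type*} [AddCommGroup M] [Module ℝ M] (b : BilinForm ℝ M)

noncomputable def conformalField (a : M) (β : ℝ) (B : M →ₗ[ℝ] M) (γ : M) (x : M) : M :=
  (b a x + β) • x - ((1 / 2 : ℝ) * b x x) • a + B x + (1 / 2 : ℝ) • γ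

variable {b}

theorem apply_self_eq_zero_of_skew (hb : b.IsSymm) {B : M →ₗ[ℝ] M}
    (hB : ∀ u v, b (B u) v = -b u (B v)) (x : M) : b (B x) x = 0 := by
  have h := hB x x
  rw [hb.eq x (B x)] at h
  linarith

theorem conformalField_apply_self (hb : b.IsSymm) (a : M) (β : ℝ) {B : M →ₗ[ℝ] M}
    (hB : ∀ u v, b (B u) v = -b u (B v)) (γ x : M) :
    b (b.conformalField a β B γ x) x = β * b x x + (1 / 2) * b x x * b a x + (1 / 2) * b γ x := by
  simp only [conformalField, map_add, map_sub, map_smul, LinearMap.add_apply,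
    LinearMap.sub_apply, LinearMap.smul_apply, smul_eq_mul, apply_self_eq_zero_of_skew hb hB]
  ring

theorem conformalField_apply_self_of_apply_self_eq_neg_one (hb : b.IsSymm) (a : M) (β : ℝ)
    {B : M →ₗ[ℝ] M} (hB : ∀ u v, b (B u) v = -b u (B v)) (γ : M) {x : M} (hx : b x x = -1) :
    b (b.conformalField a β B γ x) x = -β + (1 / 2) * b (γ - a) x := by
  rw [conformalField_apply_self hb a β hB, hx, map_sub, LinearMap.sub_apply]
  ring

end LinearMap.BilinForm

noncomputable def minkowskiForm (n : ℕ) : BilinForm ℝ (Fin (n + 1) → ℝ) :=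
  Matrix.toBilin' (Matrix.diagonal (Fin.cons (-1) 1))

theorem minkowskiForm_apply {n : ℕ} (x y : Fin (n + 1) → ℝ) :
    minkowskiForm n x y = -(x 0 * y 0) + ∑ i : Fin n, x i.succ * y i.succ := by
  simp [minkowskiForm, Matrix.toBilin'_apply', dotProduct, Matrix.mulVec_diagonal,
    Fin.sum_univ_succ]

theorem minkowskiForm_isSymm (n : ℕ) : (minkowskiForm n).IsSymm :=
  ⟨fun x y => by simp only [minkowskiForm_apply, mul_comm]⟩

/-- The angle function of a conformal vector field of Lorentz space restricted to the
hyperboloid model of `ℍ^n` is, up to an additive constant, a height function: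
`C(x) = −β + (1/2)η(γ − a, x)` (cf. Proposition 4.1 of the paper). -/
theorem angle_function_hyperboloid_is_height (n : ℕ)
    (η : (Fin (n + 1) → ℝ) → (Fin (n + 1) → ℝ) → ℝ)
    (hη : ∀ x y, η x y = -(x 0 * y 0) + ∑ i : Fin n, x i.succ * y i.succ)
    (a γ : Fin (n + 1) → ℝ) (β : ℝ)
    (B : (Fin (n + 1) → ℝ) →ₗ[ℝ] (Fin (n + 1) → ℝ))
    (hB : ∀ u v, η (B u) v = -η u (B v))
    (Vbar : (Fin (n + 1) → ℝ) → (Fin (n + 1) → ℝ))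
    (hVbar : ∀ x, Vbar x =
      (η a x + β) • x - ((1 / 2 : ℝ) * η x x) • a + B x + (1 / 2 : ℝ) • γ)
    (C : (Fin (n + 1) → ℝ) → ℝ) (hC : ∀ x, C x = η (Vbar x) x) :
    ∀ x : Fin (n + 1) → ℝ, η x x = -1 →
      C x = -β + (1 / 2 : ℝ) * η (γ - a) x := by
  have hη_eq : η = fun x y => minkowskiForm n x y := by
    funext x y
    rw [hη, minkowskiForm_apply]
  subst hη_eq
  have hVbar_eq : Vbar = (minkowskiForm n).conformalField a β B γ := funext hVbar
  intro x hx
  rw [hC, hVbar_eq]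
  exact (minkowskiForm n).conformalField_apply_self_of_apply_self_eq_neg_one
    (minkowskiForm_isSymm n) a β hB γ hx
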